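/- Let M be the 2×2 complex matrix with entries M₁₁ = θ₁(s_k+u|2τ), M₁₂ = γ_k·θ₁(t_k−u|2τ), M₂₁ = θ₄(s_k+u|2τ), M₂₂ = γ_k·θ₄(t_k−u|2τ), where s_k = s+kη, t_k = t+kη, x_k = (s+t)/2 + kη, and γ_k = 2/(θ₂(x_k|τ)·θ₂(0|τ)). Then det M = 2·θ₁(y+u|τ)/θ₂(0|τ), where y = (s−t)/2. -/

import Mathlib

open Complex

/-- Jacobi theta function θ₁(u|τ). -/
noncomputable def theta1 (u τ : ℂ) : ℂ :=
  -I * ∑' k : ℤ, (-1 : ℂ) ^ k * Complex.exp ((Real.pi : ℂ) * I * τ * ((k : ℂ) + 1/2) ^ 2) *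
      Complex.exp ((Real.pi : ℂ) * I * (2 * (k : ℂ) + 1) * u)

/-- Jacobi theta function θ₂(u|τ). -/
noncomputable def theta2 (u τ : ℂ) : ℂ :=
  ∑' k : ℤ, Complex.exp ((Real.pi : ℂ) * I * τ * ((k : ℂ) + 1/2) ^ 2) *
      Complex.exp ((Real.pi : ℂ) * I * (2 * (k : ℂ) + 1) * u)

/-- Jacobi theta function θ₃(u|τ). -/
noncomputable def theta3 (u τ : ℂ) : ℂ :=
  ∑' k : ℤ, Complex.exp ((Real.pi : ℂ) * I * τ * (k : ℂ) ^ 2) *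
      Complex.exp (2 * (Real.pi : ℂ) * I * (k : ℂ) * u)

/-- Jacobi theta function θ₄(u|τ). -/
noncomputable def theta4 (u τ : ℂ) : ℂ :=
  ∑' k : ℤ, (-1 : ℂ) ^ k * Complex.exp ((Real.pi : ℂ) * I * τ * (k : ℂ) ^ 2) *
      Complex.exp (2 * (Real.pi : ℂ) * I * (k : ℂ) * u)

/-!
Write `θ₁(x|τ) = -i ∑ (-1)^k q_k(x)` and `θ₂(x|τ) = ∑ q_k(x)` with the same terms `q_k`.
Multiplying out, `θ₁(a)θ₂(b) + θ₂(a)θ₁(b)` becomes the double series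
`-i ∑_{p,r} ((-1)^p + (-1)^r) q_p(a) q_r(b)`, whose coefficient vanishes unless `p + r` is even.
Substituting `p = m + n`, `r = m - n` completes the square in the exponents and splits the
series into the product `2 θ₁(a+b|2τ) θ₄(a-b|2τ)`. Subtracting the same formula with `b ↦ -b`
(`θ₁` is odd, `θ₂` even) gives `θ₁(a+b|2τ)θ₄(a-b|2τ) - θ₄(a+b|2τ)θ₁(a-b|2τ) = θ₂(a)θ₁(b)`,
which for `a = x_k`, `b = y + u` is the determinant divided by `γ_k`.
-/

lemma neg_one_zpow_add_neg_one_zpow_of_odd {K : Type*} [Field K] {p r : ℤ}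
    (h : Odd (p + r)) : (-1 : K) ^ p + (-1 : K) ^ r = 0 := by
  have hpr : Odd (p - r) := by
    obtain ⟨m, hm⟩ := h
    exact ⟨m - r, by omega⟩
  rw [← sub_add_cancel p r, zpow_add₀ (by norm_num), hpr.neg_one_zpow]
  ring

lemma neg_one_zpow_add_add_neg_one_zpow_sub {K : Type*} [Field K] (m n : ℤ) :
    (-1 : K) ^ (m + n) + (-1 : K) ^ (m - n) = 2 * (-1 : K) ^ m * (-1 : K) ^ n := by
  have h2n : Even (2 * n) := even_two_mul n
  rw [show m - n = m + n - 2 * n by ring, zpow_sub₀ (by norm_num), h2n.neg_one_zpow,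
    zpow_add₀ (by norm_num)]
  ring

lemma tsum_comp_neg_sub_one {α : Type*} [AddCommMonoid α] [TopologicalSpace α] (g : ℤ → α) :
    ∑' k : ℤ, g (-k - 1) = ∑' k : ℤ, g k :=
  ((Equiv.neg ℤ).trans (Equiv.subRight 1)).tsum_eq g

lemma tsum_comp_add_sub {α : Type*} [AddCommMonoid α] [TopologicalSpace α] {f : ℤ × ℤ → α}
    (hf : ∀ p r, Odd (p + r) → f (p, r) = 0) :
    ∑' q : ℤ × ℤ, f (q.1 + q.2, q.1 - q.2) = ∑' q, f q := by
  have hinj : Function.Injective fun q : ℤ × ℤ => (q.1 + q.2, q.1 - q.2) := by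
    rintro ⟨m, n⟩ ⟨m', n'⟩ h
    simp only [Prod.mk.injEq] at h ⊢
    omega
  refine hinj.tsum_eq fun ⟨p, r⟩ hpr => ?_
  obtain ⟨m, hm⟩ := Int.not_odd_iff_even.mp fun hodd => hpr (hf p r hodd)
  exact ⟨(m, p - m), by simp only [Prod.mk.injEq]; omega⟩

noncomputable def theta2Term (x τ : ℂ) (k : ℤ) : ℂ :=
  Complex.exp ((Real.pi : ℂ) * I * τ * ((k : ℂ) + 1/2) ^ 2) *
    Complex.exp ((Real.pi : ℂ) * I * (2 * (k : ℂ) + 1) * x)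

noncomputable def theta3Term (x τ : ℂ) (k : ℤ) : ℂ :=
  Complex.exp ((Real.pi : ℂ) * I * τ * (k : ℂ) ^ 2) *
    Complex.exp (2 * (Real.pi : ℂ) * I * (k : ℂ) * x)

lemma theta1_eq_tsum (x τ : ℂ) : theta1 x τ = -I * ∑' k : ℤ, (-1 : ℂ) ^ k * theta2Term x τ k := by
  simp only [theta1, theta2Term, mul_assoc]

lemma theta2_eq_tsum (x τ : ℂ) : theta2 x τ = ∑' k : ℤ, theta2Term x τ k := rfl

lemma theta4_eq_tsum (x τ : ℂ) : theta4 x τ = ∑' k : ℤ, (-1 : ℂ) ^ k * theta3Term x τ k := by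
  simp only [theta4, theta3Term, mul_assoc]

lemma theta3Term_eq_jacobiTheta₂_term (x τ : ℂ) (k : ℤ) :
    theta3Term x τ k = jacobiTheta₂_term k x τ := by
  rw [theta3Term, jacobiTheta₂_term, ← Complex.exp_add]
  ring_nf

lemma theta2Term_eq_mul_jacobiTheta₂_term (x τ : ℂ) (k : ℤ) :
    theta2Term x τ k = Complex.exp ((Real.pi : ℂ) * I * (τ / 4 + x)) *
      jacobiTheta₂_term k (x + τ / 2) τ := by
  rw [theta2Term, jacobiTheta₂_term, ← Complex.exp_add, ← Complex.exp_add]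
  ring_nf

lemma summable_norm_theta3Term (x : ℂ) {τ : ℂ} (hτ : 0 < τ.im) :
    Summable fun k => ‖theta3Term x τ k‖ := by
  simpa only [theta3Term_eq_jacobiTheta₂_term] using
    summable_norm_iff.mpr ((summable_jacobiTheta₂_term_iff x τ).mpr hτ)

lemma summable_norm_theta2Term (x : ℂ) {τ : ℂ} (hτ : 0 < τ.im) :
    Summable fun k => ‖theta2Term x τ k‖ := by
  simpa only [theta2Term_eq_mul_jacobiTheta₂_term] using summable_norm_iff.mpr
    (((summable_jacobiTheta₂_term_iff (x + τ / 2) τ).mpr hτ).mul_left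
      (Complex.exp ((Real.pi : ℂ) * I * (τ / 4 + x))))

lemma summable_norm_neg_one_zpow_mul {f : ℤ → ℂ} (hf : Summable fun k => ‖f k‖) :
    Summable fun k => ‖(-1 : ℂ) ^ k * f k‖ := by
  simpa only [norm_mul, norm_zpow, norm_neg, norm_one, one_zpow, one_mul] using hf

lemma theta2Term_neg (x τ : ℂ) (k : ℤ) : theta2Term (-x) τ k = theta2Term x τ (-k - 1) := by
  simp only [theta2Term]
  push_cast
  ring_nf

lemma theta2_neg (x τ : ℂ) : theta2 (-x) τ = theta2 x τ := by
  simp only [theta2_eq_tsum, theta2Term_neg]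
  exact tsum_comp_neg_sub_one _

lemma theta1_neg (x τ : ℂ) : theta1 (-x) τ = -theta1 x τ := by
  have hsign (k : ℤ) : (-1 : ℂ) ^ (-k - 1) = -(-1 : ℂ) ^ k :=
    eq_neg_of_add_eq_zero_left (neg_one_zpow_add_neg_one_zpow_of_odd ⟨-1, by ring⟩)
  rw [theta1_eq_tsum, theta1_eq_tsum, ← tsum_comp_neg_sub_one fun k => _ * theta2Term x τ k]
  simp only [theta2Term_neg, hsign, neg_mul, tsum_neg]
  ring

lemma theta2Term_add_mul_theta2Term_sub (a b τ : ℂ) (m n : ℤ) :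
    theta2Term a τ (m + n) * theta2Term b τ (m - n) =
      theta2Term (a + b) (2 * τ) m * theta3Term (a - b) (2 * τ) n := by
  simp only [theta2Term, theta3Term, ← Complex.exp_add]
  push_cast
  ring_nf

theorem two_mul_theta1_add_mul_theta4_sub (a b : ℂ) {τ : ℂ} (hτ : 0 < τ.im) :
    2 * theta1 (a + b) (2 * τ) * theta4 (a - b) (2 * τ) =
      theta1 a τ * theta2 b τ + theta2 a τ * theta1 b τ := by
  have h2τ : 0 < (2 * τ).im := by simpa using hτ
  have hA := summable_norm_theta2Term a hτ
  have hB := summable_norm_theta2Term b hτ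
  calc 2 * theta1 (a + b) (2 * τ) * theta4 (a - b) (2 * τ)
      = -I * ∑' q : ℤ × ℤ, 2 * ((-1 : ℂ) ^ q.1 * theta2Term (a + b) (2 * τ) q.1 *
          ((-1 : ℂ) ^ q.2 * theta3Term (a - b) (2 * τ) q.2)) := by
        rw [theta1_eq_tsum, theta4_eq_tsum, tsum_mul_left, ← tsum_mul_tsum_of_summable_norm
          (summable_norm_neg_one_zpow_mul (summable_norm_theta2Term _ h2τ))
          (summable_norm_neg_one_zpow_mul (summable_norm_theta3Term _ h2τ))]
        ring
    _ = -I * ∑' q : ℤ × ℤ, ((-1 : ℂ) ^ q.1 + (-1 : ℂ) ^ q.2) *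
          (theta2Term a τ q.1 * theta2Term b τ q.2) := by
        congr 1
        refine (tsum_congr fun ⟨m, n⟩ => ?_).trans (tsum_comp_add_sub fun p r hodd => ?_)
        · rw [neg_one_zpow_add_neg_one_zpow_of_odd hodd, zero_mul]
        · dsimp only
          rw [neg_one_zpow_add_add_neg_one_zpow_sub, theta2Term_add_mul_theta2Term_sub]
          ring
    _ = theta1 a τ * theta2 b τ + theta2 a τ * theta1 b τ := by
        rw [theta1_eq_tsum, theta1_eq_tsum, theta2_eq_tsum, theta2_eq_tsum, mul_assoc,
          mul_left_comm _ (-I), ← mul_add, tsum_mul_tsum_of_summable_norm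
          (summable_norm_neg_one_zpow_mul hA) hB, tsum_mul_tsum_of_summable_norm hA
          (summable_norm_neg_one_zpow_mul hB), ← Summable.tsum_add
          (summable_mul_of_summable_norm (summable_norm_neg_one_zpow_mul hA) hB)
          (summable_mul_of_summable_norm hA (summable_norm_neg_one_zpow_mul hB))]
        congr 1
        exact tsum_congr fun q => by ring

theorem theta1_add_mul_theta4_sub_sub_theta4_add_mul_theta1_sub (a b : ℂ) {τ : ℂ}
    (hτ : 0 < τ.im) :
    theta1 (a + b) (2 * τ) * theta4 (a - b) (2 * τ) -
        theta4 (a + b) (2 * τ) * theta1 (a - b) (2 * τ) = theta2 a τ * theta1 b τ := by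
  have hplus := two_mul_theta1_add_mul_theta4_sub a b hτ
  have hminus := two_mul_theta1_add_mul_theta4_sub a (-b) hτ
  rw [← sub_eq_add_neg, sub_neg_eq_add, theta1_neg, theta2_neg] at hminus
  linear_combination (hplus - hminus) / 2

theorem gauge_matrix_det_general (τ s t u η : ℂ) (hτ : 0 < τ.im) (k : ℤ)
    (hx : theta2 ((s + t) / 2 + (k : ℂ) * η) τ ≠ 0) :
    Matrix.det
      !![theta1 ((s + (k : ℂ) * η) + u) (2 * τ),
          (2 / (theta2 ((s + t) / 2 + (k : ℂ) * η) τ * theta2 0 τ)) *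
            theta1 ((t + (k : ℂ) * η) - u) (2 * τ);
        theta4 ((s + (k : ℂ) * η) + u) (2 * τ),
          (2 / (theta2 ((s + t) / 2 + (k : ℂ) * η) τ * theta2 0 τ)) *
            theta4 ((t + (k : ℂ) * η) - u) (2 * τ)] =
      2 * theta1 ((s - t) / 2 + u) τ / theta2 0 τ := by
  set x := (s + t) / 2 + (k : ℂ) * η
  set y := (s - t) / 2 + u
  have hsum : s + (k : ℂ) * η + u = x + y := by ring
  have hdiff : t + (k : ℂ) * η - u = x - y := by ring
  rw [Matrix.det_fin_two_of, hsum, hdiff]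
  calc theta1 (x + y) (2 * τ) * (2 / (theta2 x τ * theta2 0 τ) * theta4 (x - y) (2 * τ)) -
        2 / (theta2 x τ * theta2 0 τ) * theta1 (x - y) (2 * τ) * theta4 (x + y) (2 * τ)
      = 2 / (theta2 x τ * theta2 0 τ) * (theta1 (x + y) (2 * τ) * theta4 (x - y) (2 * τ) -
          theta4 (x + y) (2 * τ) * theta1 (x - y) (2 * τ)) := by ring
    _ = 2 / (theta2 x τ * theta2 0 τ) * (theta2 x τ * theta1 y τ) := by
        rw [theta1_add_mul_theta4_sub_sub_theta4_add_mul_theta1_sub x y hτ]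
    _ = 2 * theta1 y τ / theta2 0 τ := by
        rw [div_mul_eq_mul_div, mul_left_comm, mul_div_mul_left _ _ hx]

theorem gauge_matrix_det (τ s t u η : ℂ) (hτ : 0 < τ.im) (k : ℤ)
    (hx : theta2 ((s + t) / 2 + (k : ℂ) * η) τ ≠ 0)
    (h0 : theta2 0 τ ≠ 0) :
    Matrix.det
      !![theta1 ((s + (k : ℂ) * η) + u) (2 * τ),
          (2 / (theta2 ((s + t) / 2 + (k : ℂ) * η) τ * theta2 0 τ)) *
            theta1 ((t + (k : ℂ) * η) - u) (2 * τ);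
        theta4 ((s + (k : ℂ) * η) + u) (2 * τ),
          (2 / (theta2 ((s + t) / 2 + (k : ℂ) * η) τ * theta2 0 τ)) *
            theta4 ((t + (k : ℂ) * η) - u) (2 * τ)] =
      2 * theta1 ((s - t) / 2 + u) τ / theta2 0 τ :=
  gauge_matrix_det_general τ s t u η hτ k hx
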